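/- Let a_0,...,a_k ∈ ℂ[X_1,...,X_N] be holomorphic polynomials, not all identically zero, with a_0 ≢ 0, and let M ⊂ ℂ^N be a real analytic hypersurface through a point p. If a smooth function g on M satisfies ∑_{j=0}^k a_j(Z) g(Z)^j ≡ 0 on an open subset U_0 of M, with the polynomial P(Z,X) = ∑ a_j(Z)X^j irreducible, and g vanishes to infinite order at a point p in the closure of U_0 while g|_{U_0} ≢ 0, then the restriction of a_0 to M vanishes to infinite order at p, and hence (since a_0 is a polynomial and M is real analytic and generic) a_0 ≡ 0 — a contradiction. Therefore g cannot vanish to infinite order at any point of the closure of U_0. -/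

import Mathlib

open MvPolynomial Topology Filter

lemma coeff_pderiv' {σ : Type*} {R : Type*} [CommRing R] (i : σ) (d : σ →₀ ℕ)
    (f : MvPolynomial σ R) :
    coeff d (pderiv i f) = (d i + 1 : ℕ) * coeff (d + Finsupp.single i 1) f := by
  classical
  induction f using MvPolynomial.induction_on' with
  | monomial s a =>
    rw [pderiv_monomial, coeff_monomial, coeff_monomial]
    split_ifs with h1 h2 h2
    · subst h2
      simp only [Finsupp.add_apply, Finsupp.single_eq_same]
      push_cast
      ring
    · -- s - single i 1 = d but s ≠ d + single i 1 : then s i = 0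
      rcases Nat.eq_zero_or_pos (s i) with hs | hs
      · simp [hs]
      · exfalso
        apply h2
        rw [← h1]
        ext j
        rcases eq_or_ne j i with rfl | hj
        · simp [Finsupp.single_apply]
          omega
        · simp [Finsupp.single_apply, hj.symm, Ne.symm hj]
    · exfalso
      subst h2
      exact h1 (add_tsub_cancel_right _ _)
    · ring
  | add p q hp hq => simp [hp, hq, mul_add]

lemma sum_add_single {σ : Type*} (d : σ →₀ ℕ) (i : σ) :
    ((d + Finsupp.single i 1).sum fun _ e => e) = (d.sum fun _ e => e) + 1 := by
  classical
  rw [Finsupp.sum_add_index' (fun _ => rfl) (fun _ _ _ => rfl), Finsupp.sum_single_index rfl]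

lemma eq_C_of_pderiv_eq_zero {σ : Type*} (q : MvPolynomial σ ℂ)
    (h : ∀ i, pderiv i q = 0) : q = C (coeff 0 q) := by
  classical
  ext d
  rcases eq_or_ne d 0 with rfl | hd
  · simp
  · rw [coeff_C, if_neg (Ne.symm hd)]
    obtain ⟨i, hi⟩ : ∃ i, d i ≠ 0 := by
      by_contra hc
      push_neg at hc
      exact hd (Finsupp.ext hc)
    set e : σ →₀ ℕ := d - Finsupp.single i 1 with he
    have hds : e + Finsupp.single i 1 = d := by
      ext j
      rcases eq_or_ne j i with rfl | hj
      · simp [he, Finsupp.single_apply]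
        omega
      · simp [he, Finsupp.single_apply, Ne.symm hj]
    have := coeff_pderiv' i e q
    rw [h i, hds] at this
    simp only [coeff_zero] at this
    have hne : ((e i + 1 : ℕ) : ℂ) ≠ 0 := by
      push_cast
      exact Nat.cast_add_one_ne_zero _
    exact (mul_eq_zero.1 this.symm).resolve_left hne

lemma totalDegree_pderiv_le' {σ : Type*} (q : MvPolynomial σ ℂ) (i : σ) (n : ℕ)
    (h : q.totalDegree ≤ n + 1) : (pderiv i q).totalDegree ≤ n := by
  classical
  rw [MvPolynomial.totalDegree]
  apply Finset.sup_le
  intro d hd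
  rw [MvPolynomial.mem_support_iff, coeff_pderiv' i d q] at hd
  have h2 : coeff (d + Finsupp.single i 1) q ≠ 0 := fun hz => hd (by rw [hz, mul_zero])
  have h3 := MvPolynomial.le_totalDegree (MvPolynomial.mem_support_iff.2 h2)
  rw [sum_add_single] at h3
  omega

noncomputable def evalDeriv {N : ℕ} (q : MvPolynomial (Fin N) ℂ) (y : Fin N → ℂ) :
    (Fin N → ℂ) →L[ℂ] ℂ :=
  ∑ j : Fin N, eval y (pderiv j q) • (ContinuousLinearMap.proj j : (Fin N → ℂ) →L[ℂ] ℂ)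

lemma evalDeriv_single {N : ℕ} (q : MvPolynomial (Fin N) ℂ) (y : Fin N → ℂ) (j : Fin N) :
    evalDeriv q y (Pi.single j 1) = eval y (pderiv j q) := by
  classical
  rw [evalDeriv]
  rw [ContinuousLinearMap.sum_apply]
  rw [Finset.sum_eq_single j]
  · simp
  · intro b _ hb
    simp [Pi.single_eq_of_ne hb]
  · simp

lemma eval_hasFDerivAt {N : ℕ} (q : MvPolynomial (Fin N) ℂ) (y : Fin N → ℂ) :
    HasFDerivAt (fun x : Fin N → ℂ => eval x q) (evalDeriv q y) y := by
  classical
  induction q using MvPolynomial.induction_on with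
  | C a =>
    have h : evalDeriv (C a : MvPolynomial (Fin N) ℂ) y = 0 := by
      rw [evalDeriv]
      refine Finset.sum_eq_zero fun j _ => ?_
      rw [pderiv_C, map_zero]
      module
    rw [h]
    simp only [eval_C]
    exact hasFDerivAt_const a y
  | add p q hp hq =>
    have h : evalDeriv (p + q) y = evalDeriv p y + evalDeriv q y := by
      rw [evalDeriv, evalDeriv, evalDeriv, ← Finset.sum_add_distrib]
      apply Finset.sum_congr rfl
      intro j _
      rw [map_add, map_add]
      module
    rw [h]
    simp only [map_add]
    exact hp.add hq
  | mul_X p i hp =>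
    have hx : HasFDerivAt (fun x : Fin N → ℂ => x i)
        (ContinuousLinearMap.proj i : (Fin N → ℂ) →L[ℂ] ℂ) y := by
      exact (ContinuousLinearMap.proj i : (Fin N → ℂ) →L[ℂ] ℂ).hasFDerivAt
    have hmul := hp.mul hx
    have key : ∀ j : Fin N, eval y (pderiv j (p * X i)) •
          (ContinuousLinearMap.proj j : (Fin N → ℂ) →L[ℂ] ℂ) =
        (if j = i then eval y p • (ContinuousLinearMap.proj i : (Fin N → ℂ) →L[ℂ] ℂ) else 0) +
          y i • (eval y (pderiv j p) • (ContinuousLinearMap.proj j : (Fin N → ℂ) →L[ℂ] ℂ)) := by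
      intro j
      rcases eq_or_ne j i with rfl | hj
      · rw [if_pos rfl, pderiv_mul, pderiv_X_self]
        simp only [map_add, map_mul, eval_X, map_one, mul_one]
        module
      · rw [if_neg hj, pderiv_mul, pderiv_X_of_ne (Ne.symm hj)]
        simp only [map_add, map_mul, eval_X, mul_zero, map_zero, add_zero]
        module
    have h : evalDeriv (p * X i) y =
        eval y p • (ContinuousLinearMap.proj i : (Fin N → ℂ) →L[ℂ] ℂ) + y i • evalDeriv p y := by
      rw [evalDeriv, Finset.sum_congr rfl (fun j _ => key j), Finset.sum_add_distrib,
        evalDeriv, Finset.smul_sum]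
      congr 1
      simp
    rw [h]
    simpa only [eval_mul, eval_X, Pi.mul_def] using hmul

lemma clm_eq_zero_of_vanish_on_range {N m : ℕ} (hm : m = 2 * N - 1) (hN : 1 ≤ N)
    (L : (Fin m → ℝ) →ₗ[ℝ] (Fin N → ℂ)) (hL : Function.Injective L)
    (D : (Fin N → ℂ) →L[ℂ] ℂ) (h : ∀ v, D (L v) = 0) : D = 0 := by
  by_contra hD
  obtain ⟨v, hv⟩ : ∃ v, D v ≠ 0 := by
    by_contra hc
    push_neg at hc
    exact hD (ContinuousLinearMap.ext hc)
  set Dl : (Fin N → ℂ) →ₗ[ℂ] ℂ := (D : (Fin N → ℂ) →ₗ[ℂ] ℂ)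
  have hsurj : Function.Surjective Dl := by
    intro c
    exact ⟨(c / D v) • v, by simp [Dl, div_mul_cancel₀ _ hv]⟩
  have hrange : LinearMap.range Dl = ⊤ := LinearMap.range_eq_top.2 hsurj
  have hrk : Module.finrank ℂ (LinearMap.range Dl) + Module.finrank ℂ (LinearMap.ker Dl) = N := by
    rw [LinearMap.finrank_range_add_finrank_ker Dl]
    simp [Module.finrank_pi]
  rw [hrange] at hrk
  rw [finrank_top, Module.finrank_self] at hrk
  have hker : Module.finrank ℂ (LinearMap.ker Dl) = N - 1 := by omega
  -- real dimension of the kernel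
  have hkerR : Module.finrank ℝ ((LinearMap.ker Dl).restrictScalars ℝ) = 2 * (N - 1) := by
    have h1 : Module.finrank ℝ ((LinearMap.ker Dl).restrictScalars ℝ)
        = Module.finrank ℝ (LinearMap.ker Dl) := rfl
    rw [h1, ← Module.finrank_mul_finrank ℝ ℂ (LinearMap.ker Dl),
      Complex.finrank_real_complex, hker]
  have hsub : LinearMap.range L ≤ (LinearMap.ker Dl).restrictScalars ℝ := by
    rintro y ⟨w, rfl⟩
    exact h w
  have hrgL : Module.finrank ℝ (LinearMap.range L) = m := by
    rw [LinearMap.finrank_range_of_inj hL]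
    simp [Module.finrank_pi]
  have := Submodule.finrank_mono hsub
  rw [hrgL, hkerR] at this
  omega

lemma pderiv_vanish_on_image {N m : ℕ} (hm : m = 2 * N - 1) (hN : 1 ≤ N)
    (φ : (Fin m → ℝ) → (Fin N → ℂ)) (hφ : AnalyticOnNhd ℝ φ Set.univ)
    (himm : ∀ x, Function.Injective (fderiv ℝ φ x))
    (q : MvPolynomial (Fin N) ℂ) (hq : ∀ x, eval (φ x) q = 0) :
    ∀ (j : Fin N) (x : Fin m → ℝ), eval (φ x) (pderiv j q) = 0 := by
  intro j x
  have hφd : HasFDerivAt φ (fderiv ℝ φ x) x :=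
    ((hφ x trivial).differentiableAt).hasFDerivAt
  have hev : HasFDerivAt (fun z : Fin N → ℂ => eval z q)
      ((evalDeriv q (φ x)).restrictScalars ℝ) (φ x) :=
    (eval_hasFDerivAt q (φ x)).restrictScalars ℝ
  have hc : HasFDerivAt (fun z : Fin m → ℝ => eval (φ z) q)
      (((evalDeriv q (φ x)).restrictScalars ℝ).comp (fderiv ℝ φ x)) x := by
    have h2 := hev.comp x hφd
    exact h2
  have h0 : HasFDerivAt (fun z : Fin m → ℝ => eval (φ z) q)
      (0 : (Fin m → ℝ) →L[ℝ] ℂ) x := by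
    have hfun : (fun z : Fin m → ℝ => eval (φ z) q) = fun _ => (0 : ℂ) := funext hq
    rw [hfun]
    exact hasFDerivAt_const 0 x
  have heq := hc.unique h0
  have hz : evalDeriv q (φ x) = 0 := by
    apply clm_eq_zero_of_vanish_on_range hm hN (fderiv ℝ φ x).toLinearMap (himm x)
    intro v
    have := congrFun (congrArg (fun (T : (Fin m → ℝ) →L[ℝ] ℂ) => (T : (Fin m → ℝ) → ℂ)) heq) v
    simpa using this
  rw [← evalDeriv_single q (φ x) j, hz]
  rfl

lemma vanish_poly_eq_zero {N m : ℕ} (hm : m = 2 * N - 1) (hN : 1 ≤ N)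
    (φ : (Fin m → ℝ) → (Fin N → ℂ)) (hφ : AnalyticOnNhd ℝ φ Set.univ)
    (himm : ∀ x, Function.Injective (fderiv ℝ φ x)) :
    ∀ (n : ℕ) (q : MvPolynomial (Fin N) ℂ), q.totalDegree ≤ n →
      (∀ x, eval (φ x) q = 0) → q = 0 := by
  intro n
  induction n with
  | zero =>
    intro q hdeg hq
    have hpd : ∀ i, pderiv i q = 0 := by
      intro i
      ext d
      rw [coeff_pderiv' i d q, coeff_zero]
      have : q.totalDegree < ((d + Finsupp.single i 1).sum fun _ e => e) := by
        rw [sum_add_single]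
        omega
      rw [MvPolynomial.coeff_eq_zero_of_totalDegree_lt this, mul_zero]
    have hC := eq_C_of_pderiv_eq_zero q hpd
    have h0 := hq 0
    rw [hC, eval_C] at h0
    rw [hC, h0, map_zero]
  | succ n ih =>
    intro q hdeg hq
    have hpd : ∀ i, pderiv i q = 0 := fun i =>
      ih (pderiv i q) (totalDegree_pderiv_le' q i n hdeg)
        (fun x => pderiv_vanish_on_image hm hN φ hφ himm q hq i x)
    have hC := eq_C_of_pderiv_eq_zero q hpd
    have h0 := hq 0
    rw [hC, eval_C] at h0
    rw [hC, h0, map_zero]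


/-- Lemma 2.5: let `M` be a real analytic hypersurface in `ℂ^N`, locally parametrized
by a real analytic immersion `φ : ℝ^{2N-1} → ℂ^N`, and let `g` be a smooth function on
`M` satisfying on an open connected set `U₀` an irreducible polynomial relation
`∑_{j=0}^{k} a_j(Z) g(Z)^j ≡ 0` (where `P(Z,X) = ∑ a_j(Z) X^j` is irreducible, `k ≥ 1`
and `a_0 ≢ 0`).  If `g` does not vanish identically on `U₀`, then `g` cannot vanish to
infinite order (in the local coordinates on `M`) at any point of the closure of `U₀`. -/
theorem algebraic_CR_function_finite_order {N m : ℕ} (hm : m = 2 * N - 1) (hN : 1 ≤ N)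
    (φ : (Fin m → ℝ) → (Fin N → ℂ))
    (hφ : AnalyticOnNhd ℝ φ Set.univ)
    (himm : ∀ x, Function.Injective (fderiv ℝ φ x))
    (U₀ : Set (Fin m → ℝ)) (hU₀open : IsOpen U₀) (hU₀conn : IsConnected U₀)
    (g : (Fin m → ℝ) → ℂ) (hg : ContDiff ℝ (⊤ : ℕ∞) g)
    (P : Polynomial (MvPolynomial (Fin N) ℂ))
    (hPirr : Irreducible P) (hPdeg : 1 ≤ P.natDegree) (ha0 : P.coeff 0 ≠ 0)
    (hrel : ∀ x ∈ U₀, Polynomial.eval (g x) (P.map (MvPolynomial.eval (φ x))) = 0)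
    (hgne : ∃ x ∈ U₀, g x ≠ 0) :
    ∀ p ∈ closure U₀, ¬ (∀ n : ℕ, iteratedFDeriv ℝ n g p = 0) := by
  classical
  intro p hp hvan
  have hAanal : ∀ q : MvPolynomial (Fin N) ℂ,
      AnalyticOnNhd ℝ (fun x => eval (φ x) q) Set.univ := by
    intro q
    have h1 : AnalyticOnNhd ℂ (fun z : Fin N → ℂ => eval z q) Set.univ :=
      AnalyticOnNhd.eval_mvPolynomial q
    exact (h1.restrictScalars).comp hφ (Set.mapsTo_univ _ _)
  have hAsm : ∀ q : MvPolynomial (Fin N) ℂ, ContDiff ℝ (⊤ : ℕ∞) (fun x => eval (φ x) q) :=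
    fun q => (hAanal q).contDiff
  set k := P.natDegree with hk
  set A : ℕ → (Fin m → ℝ) → ℂ := fun j x => eval (φ x) (P.coeff j) with hA
  set F : (Fin m → ℝ) → ℂ := fun x => ∑ j ∈ Finset.range (k + 1), A j x * g x ^ j with hF
  set H : (Fin m → ℝ) → ℂ := fun x => ∑ j ∈ Finset.range k, A (j + 1) x * g x ^ j with hH
  have hFsm : ContDiff ℝ (⊤ : ℕ∞) F := ContDiff.sum fun j _ => (hAsm _).mul (hg.pow j)
  have hHsm : ContDiff ℝ (⊤ : ℕ∞) H := ContDiff.sum fun j _ => (hAsm _).mul (hg.pow j)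
  have hsplit : F = fun x => A 0 x + g x * H x := by
    funext x
    rw [hF, hH]
    simp only
    rw [Finset.sum_range_succ', Finset.mul_sum]
    rw [add_comm]
    congr 1
    · simp
    · apply Finset.sum_congr rfl
      intro j _
      ring
  have hFU : ∀ x ∈ U₀, F x = 0 := by
    intro x hx
    have h0 := hrel x hx
    rw [Polynomial.eval_eq_sum_range'
      (lt_of_le_of_lt Polynomial.natDegree_map_le (Nat.lt_succ_self k))] at h0
    simpa [hF, hA, Polynomial.coeff_map] using h0
  have hFd : ∀ n : ℕ, iteratedFDeriv ℝ n F p = 0 := by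
    intro n
    have hcl : IsClosed {x | iteratedFDeriv ℝ n F x = 0} :=
      isClosed_eq (hFsm.continuous_iteratedFDeriv (by exact_mod_cast le_top)) continuous_const
    have hsub : U₀ ⊆ {x | iteratedFDeriv ℝ n F x = 0} := by
      intro x hx
      have hmem : U₀ ∈ 𝓝[Set.univ] x := mem_nhdsWithin_of_mem_nhds (hU₀open.mem_nhds hx)
      have hev : F =ᶠ[𝓝[Set.univ] x] fun _ => (0 : ℂ) :=
        Filter.eventuallyEq_of_mem hmem hFU
      have heq := Filter.EventuallyEq.iteratedFDerivWithin_eq (𝕜 := ℝ) hev (hFU x hx) n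
      rw [iteratedFDerivWithin_univ, iteratedFDerivWithin_univ] at heq
      have hz : iteratedFDeriv ℝ n (fun _ : Fin m → ℝ => (0 : ℂ)) x = 0 := by
        simp [iteratedFDeriv_zero_fun]
      exact heq.trans hz
    exact closure_minimal hsub hcl hp
  have hgH : ∀ n : ℕ, iteratedFDeriv ℝ n (fun x => g x * H x) p = 0 := by
    intro n
    have hb := norm_iteratedFDeriv_mul_le hg hHsm p (n := n) (by exact_mod_cast le_top)
    have hzs : ∑ i ∈ Finset.range (n + 1), (n.choose i : ℝ) * ‖iteratedFDeriv ℝ i g p‖ *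
        ‖iteratedFDeriv ℝ (n - i) H p‖ = 0 := by
      apply Finset.sum_eq_zero
      intro i _
      rw [hvan i]
      simp
    rw [hzs] at hb
    exact norm_eq_zero.1 (le_antisymm hb (norm_nonneg _))
  have hA0d : ∀ n : ℕ, iteratedFDeriv ℝ n (A 0) p = 0 := by
    intro n
    have hadd := iteratedFDeriv_add_apply (𝕜 := ℝ) (i := n) (x := p)
      ((hAsm (P.coeff 0)).contDiffAt.of_le (by exact_mod_cast le_top)) ((hg.mul hHsm).contDiffAt.of_le (by exact_mod_cast le_top))
    have hFn := hFd n
    rw [hsplit] at hFn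
    have hfun : ((fun x => eval (φ x) (P.coeff 0)) + fun x => g x * H x)
        = (fun x => A 0 x + g x * H x) := rfl
    rw [hfun] at hadd
    rw [hadd, hgH n, add_zero] at hFn
    exact hFn
  have hA0anal := hAanal (P.coeff 0)
  have hzero : ∀ x, A 0 x = 0 := by
    obtain ⟨ser, hser⟩ := hA0anal p (Set.mem_univ p)
    obtain ⟨r, hr⟩ := hser
    have hb : ∀ y ∈ Metric.eball (0 : Fin m → ℝ) r, A 0 (p + y) = 0 := by
      intro y hy
      have hs := hr.hasSum_iteratedFDeriv hy
      have hz : (fun n : ℕ => ((Nat.factorial n : ℝ))⁻¹ • iteratedFDeriv ℝ n (A 0) p fun _ => y) =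
          fun _ => (0 : ℂ) := by
        funext n
        rw [hA0d n]
        simp
      rw [hz] at hs
      exact (hasSum_zero.unique hs).symm
    have hev : A 0 =ᶠ[𝓝 p] 0 := by
      filter_upwards [EMetric.ball_mem_nhds p hr.r_pos] with z hz
      have hz' : z - p ∈ Metric.eball (0 : Fin m → ℝ) r := by
        rw [EMetric.mem_ball] at hz ⊢
        simpa [edist_eq_enorm_sub] using hz
      have := hb (z - p) hz'
      simpa using this
    have := hA0anal.eqOn_zero_of_preconnected_of_eventuallyEq_zero
      isPreconnected_univ (Set.mem_univ p) hev
    exact fun x => this (Set.mem_univ x)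
  exact ha0 (vanish_poly_eq_zero hm hN φ hφ himm (P.coeff 0).totalDegree
    (P.coeff 0) le_rfl hzero)
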